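/- Let X be Gaussian with mean λ₁ and standard deviation λ₂ ≥ 0, p ∈ (0.5, 1), and suppose 0 ≤ λ₂ˡ ≤ λ₂. If P(X ≤ 0) ≥ p, then λ₁ + F⁻¹(p)·λ₂ˡ ≤ 0. -/

import Mathlib

/-! If `σ > 0`, then `P(X ≤ 0) = Φ(-λ₁/σ) ≥ p`, so `F⁻¹(p) ≤ -λ₁/σ`, i.e. `λ₁ + F⁻¹(p) σ ≤ 0`
(for `σ = 0` the law is a Dirac mass at `λ₁` and `λ₁ ≤ 0` directly). Since `p > 1/2 = Φ(0)`,
`F⁻¹(p) ≥ 0`, so replacing `σ` by a smaller `λ₂ˡ` keeps the inequality. -/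

open MeasureTheory ProbabilityTheory

/-- The quantile function (generalized inverse of the CDF) of the standard normal
distribution `N(0,1)`. -/
noncomputable def stdNormalQuantile (p : ℝ) : ℝ :=
  sInf {x : ℝ | p ≤ cdf (gaussianReal 0 1) x}

open Set

lemma cdf_centered_gaussianReal_zero {v : NNReal} (hv : v ≠ 0) : cdf (gaussianReal 0 v) 0 = 1 / 2 := by
  have := nullSingletonClass_gaussianReal (μ := 0) hv
  have h_symm : (gaussianReal 0 v).real (Iic 0) = (gaussianReal 0 v).real (Ici 0) := by
    conv_lhs => rw [← neg_zero, ← gaussianReal_map_neg]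
    rw [map_measureReal_apply (by fun_prop) measurableSet_Iic]
    congr 1
    ext x
    simp
  have h_compl : (gaussianReal 0 v).real (Ioi 0) = 1 - (gaussianReal 0 v).real (Iic 0) := by
    rw [← compl_Iic, measureReal_compl measurableSet_Iic, probReal_univ]
  rw [cdf_eq_real]
  linarith [measureReal_congr (μ := gaussianReal 0 v) (Ioi_ae_eq_Ici (a := (0 : ℝ)))]

lemma gaussianReal_eq_map_gaussianReal_zero_one (m : ℝ) (v : NNReal) :
    gaussianReal m v = (gaussianReal 0 1).map (fun z ↦ m + √v * z) := by
  have : (fun z ↦ m + √v * z) = (m + ·) ∘ (√v * ·) := rfl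
  rw [this, ← Measure.map_map (by fun_prop) (by fun_prop), gaussianReal_map_const_mul,
    gaussianReal_map_const_add, mul_zero, zero_add, mul_one]
  congr
  ext
  simp

lemma cdf_gaussianReal_eq_cdf_zero_one (m : ℝ) {v : NNReal} (hv : v ≠ 0) (x : ℝ) :
    cdf (gaussianReal m v) x = cdf (gaussianReal 0 1) ((x - m) / √v) := by
  have hσ : 0 < √(v : ℝ) := by positivity
  rw [cdf_eq_real, cdf_eq_real, gaussianReal_eq_map_gaussianReal_zero_one,
    map_measureReal_apply (by fun_prop) measurableSet_Iic]
  congr 1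
  ext z
  simp [le_div_iff₀ hσ, mul_comm √(v : ℝ), le_sub_iff_add_le']

lemma nonneg_of_half_lt_cdf_gaussianReal_zero_one {x : ℝ}
    (hx : 1 / 2 < cdf (gaussianReal 0 1) x) : 0 ≤ x := by
  by_contra! hneg
  have := monotone_cdf (gaussianReal 0 1) hneg.le
  rw [cdf_centered_gaussianReal_zero one_ne_zero] at this
  linarith

lemma stdNormalQuantile_le {p x : ℝ} (hp : 1 / 2 < p) (hx : p ≤ cdf (gaussianReal 0 1) x) :
    stdNormalQuantile p ≤ x :=
  csInf_le ⟨0, fun _ hy ↦ nonneg_of_half_lt_cdf_gaussianReal_zero_one (hp.trans_le hy)⟩ hx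

lemma stdNormalQuantile_nonneg {p : ℝ} (hp : 1 / 2 < p) (hp1 : p < 1) :
    0 ≤ stdNormalQuantile p := by
  obtain ⟨x, hx⟩ := ((tendsto_cdf_atTop (gaussianReal 0 1)).eventually (lt_mem_nhds hp1)).exists
  exact le_csInf ⟨x, hx.le⟩ fun _ hy ↦ nonneg_of_half_lt_cdf_gaussianReal_zero_one (hp.trans_le hy)

lemma add_stdNormalQuantile_mul_sqrt_nonpos {m p : ℝ} {v : NNReal} (hp : 1 / 2 < p)
    (h : p ≤ cdf (gaussianReal m v) 0) :
    m + stdNormalQuantile p * √v ≤ 0 := by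
  rcases eq_or_ne v 0 with rfl | hv
  · rw [gaussianReal_zero_var, cdf_eq_real, measureReal_def,
      Measure.dirac_apply' _ measurableSet_Iic] at h
    by_contra! hm
    simp [show m ∉ Iic 0 by simpa using hm] at h
    linarith
  · rw [cdf_gaussianReal_eq_cdf_zero_one m hv] at h
    have := stdNormalQuantile_le hp h
    rw [le_div_iff₀ (by positivity)] at this
    linarith

theorem gaussian_chance_constraint_over_approx_high_p_general
    {Ω : Type*} [MeasurableSpace Ω] (P : Measure Ω) [IsProbabilityMeasure P]
    (X : Ω → ℝ) (lam1 lam2 lam2l p : ℝ) (hlam2 : 0 ≤ lam2)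
    (hp : p ∈ Set.Ioo (0.5 : ℝ) 1)
    (hX : Measure.map X P = gaussianReal lam1 ⟨lam2 ^ 2, sq_nonneg lam2⟩)
    (hub : lam2l ≤ lam2)
    (hsat : p ≤ (P {ω | X ω ≤ 0}).toReal) :
    lam1 + stdNormalQuantile p * lam2l ≤ 0 := by
  obtain ⟨hp_half, hp_one⟩ := hp
  norm_num at hp_half
  set v : NNReal := ⟨lam2 ^ 2, sq_nonneg lam2⟩
  have hX_meas : AEMeasurable X P := .of_map_ne_zero (hX ▸ IsProbabilityMeasure.ne_zero _)
  have h_cdf : p ≤ cdf (gaussianReal lam1 v) 0 := by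
    rw [cdf_eq_real, ← hX, map_measureReal_apply_of_aemeasurable hX_meas measurableSet_Iic]
    exact hsat
  have h_sqrt : √(v : ℝ) = lam2 := Real.sqrt_sq hlam2
  calc lam1 + stdNormalQuantile p * lam2l
      ≤ lam1 + stdNormalQuantile p * lam2 := by
        gcongr
        exact stdNormalQuantile_nonneg hp_half hp_one
    _ ≤ 0 := h_sqrt ▸ add_stdNormalQuantile_mul_sqrt_nonpos hp_half h_cdf

theorem gaussian_chance_constraint_over_approx_high_p
    {Ω : Type*} [MeasurableSpace Ω] (P : Measure Ω) [IsProbabilityMeasure P]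
    (X : Ω → ℝ) (lam1 lam2 lam2l p : ℝ) (hlam2 : 0 ≤ lam2)
    (hp : p ∈ Set.Ioo (0.5 : ℝ) 1)
    (hX : Measure.map X P = gaussianReal lam1 ⟨lam2 ^ 2, sq_nonneg lam2⟩)
    (hlb : 0 ≤ lam2l) (hub : lam2l ≤ lam2)
    (hsat : p ≤ (P {ω | X ω ≤ 0}).toReal) :
    lam1 + stdNormalQuantile p * lam2l ≤ 0 :=
  gaussian_chance_constraint_over_approx_high_p_general P X lam1 lam2 lam2l p hlam2 hp hX hub hsat
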